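/- Let G be a connected non-complete 2K2-free simple graph and let S be a minimal vertex separator of G. Then the subgraph of G induced on S has at most one non-trivial connected component. -/

import Mathlib

open SimpleGraph

/-- A simple graph is `2K₂`-free: there are no four pairwise distinct vertices `a b c d`
with `ab` and `cd` edges and none of `ac, ad, bc, bd` an edge. -/
def TwoK2Free {V : Type*} (G : SimpleGraph V) : Prop :=
  ¬ ∃ a b c d : V, a ≠ b ∧ a ≠ c ∧ a ≠ d ∧ b ≠ c ∧ b ≠ d ∧ c ≠ d ∧
    G.Adj a b ∧ G.Adj c d ∧ ¬ G.Adj a c ∧ ¬ G.Adj a d ∧ ¬ G.Adj b c ∧ ¬ G.Adj b d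

/-- `S ⊊ V(G)` is a vertex separator: deleting `S` leaves a disconnected graph. -/
def IsSeparator {V : Type*} (G : SimpleGraph V) (S : Set V) : Prop :=
  S ≠ Set.univ ∧ ¬ (G.induce (Sᶜ : Set V)).Connected

/-- A minimal vertex separator: no proper subset is a separator. -/
def IsMinSeparator {V : Type*} (G : SimpleGraph V) (S : Set V) : Prop :=
  IsSeparator G S ∧ ∀ S' : Set V, S' ⊂ S → ¬ IsSeparator G S'

/-- A connected component is trivial if its support is a single vertex. -/
def IsTrivialComp {α : Type*} {H : SimpleGraph α} (C : H.ConnectedComponent) : Prop :=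
  ∃ v, C.supp = {v}

theorem TwoK2Free.comap {V W : Type*} {G : SimpleGraph V} (hG : TwoK2Free G) {f : W → V}
    (hf : Function.Injective f) : TwoK2Free (G.comap f) := by
  rintro ⟨a, b, c, d, hab, hac, had, hbc, hbd, hcd, h⟩
  exact hG ⟨f a, f b, f c, f d, hf.ne hab, hf.ne hac, hf.ne had, hf.ne hbc, hf.ne hbd,
    hf.ne hcd, h⟩

theorem TwoK2Free.induce {V : Type*} {G : SimpleGraph V} (hG : TwoK2Free G) (s : Set V) :
    TwoK2Free (G.induce s) :=
  hG.comap Subtype.val_injective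

namespace SimpleGraph.ConnectedComponent

variable {α : Type*} {H : SimpleGraph α}

theorem exists_adj_of_not_isTrivialComp {C : H.ConnectedComponent} (hC : ¬ IsTrivialComp C) :
    ∃ a b, H.Adj a b ∧ H.connectedComponentMk a = C ∧ H.connectedComponentMk b = C := by
  obtain ⟨v, rfl⟩ := C.exists_rep
  obtain ⟨w, hw, hwv⟩ : ∃ w ∈ (H.connectedComponentMk v).supp, w ≠ v := by
    by_contra! h
    exact hC ⟨v, Set.eq_singleton_iff_unique_mem.mpr ⟨rfl, h⟩⟩
  obtain ⟨p⟩ : H.Reachable w v := ConnectedComponent.exact hw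
  cases p with
  | nil => exact absurd rfl hwv
  | cons hadj _ =>
    exact ⟨w, _, hadj, hw, (ConnectedComponent.sound hadj.reachable).symm.trans hw⟩

theorem ne_and_not_adj_of_mk_ne {x y : α}
    (h : H.connectedComponentMk x ≠ H.connectedComponentMk y) : x ≠ y ∧ ¬ H.Adj x y :=
  ⟨fun hxy => h (congrArg _ hxy), fun hxy => h (ConnectedComponent.sound hxy.reachable)⟩

end SimpleGraph.ConnectedComponent

open SimpleGraph.ConnectedComponent in
/-- Edges in two different components would form an induced `2K₂`. -/
theorem TwoK2Free.eq_of_not_isTrivialComp {α : Type*} {H : SimpleGraph α} (hH : TwoK2Free H)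
    {C D : H.ConnectedComponent} (hC : ¬ IsTrivialComp C) (hD : ¬ IsTrivialComp D) : C = D := by
  by_contra hne
  obtain ⟨a, b, hab, rfl, hbC⟩ := exists_adj_of_not_isTrivialComp hC
  obtain ⟨c, d, hcd, rfl, hdD⟩ := exists_adj_of_not_isTrivialComp hD
  obtain ⟨hac, hac'⟩ := ne_and_not_adj_of_mk_ne hne
  obtain ⟨had, had'⟩ := ne_and_not_adj_of_mk_ne (hdD ▸ hne)
  obtain ⟨hbc, hbc'⟩ := ne_and_not_adj_of_mk_ne (hbC ▸ hne)
  obtain ⟨hbd, hbd'⟩ := ne_and_not_adj_of_mk_ne (hbC ▸ hdD ▸ hne)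
  exact hH ⟨a, b, c, d, hab.ne, hac, had, hbc, hbd, hcd.ne, hab, hcd, hac', had', hbc', hbd'⟩

theorem separator_atMostOne_nontrivial_component_general {V : Type*} (G : SimpleGraph V)
    (h2k2 : TwoK2Free G) (S : Set V) :
    ∀ C D : (G.induce S).ConnectedComponent,
      ¬ IsTrivialComp C → ¬ IsTrivialComp D → C = D :=
  fun _ _ hC hD => (h2k2.induce S).eq_of_not_isTrivialComp hC hD

/-- In a connected non-complete `2K₂`-free graph, the subgraph induced on a minimal vertex
separator `S` has at most one non-trivial connected component. -/
theorem separator_atMostOne_nontrivial_component {V : Type*} (G : SimpleGraph V)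
    (hconn : G.Connected) (hnc : ∃ u v : V, u ≠ v ∧ ¬ G.Adj u v)
    (h2k2 : TwoK2Free G) (S : Set V) (hS : IsMinSeparator G S) :
    ∀ C D : (G.induce S).ConnectedComponent,
      ¬ IsTrivialComp C → ¬ IsTrivialComp D → C = D :=
  separator_atMostOne_nontrivial_component_general G h2k2 S
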